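/- Let n ≥ 5, let the candidate set be {c_0, c_1, …, c_{n−1}}, and let P_n be the profile consisting of the n cyclic votes c_i ≻ c_{(i+1) mod n} ≻ … ≻ c_{(i+n−1) mod n} for i = 0,…,n−1, together with the single vote c_{n−1} ≻ c_{n−2} ≻ … ≻ c_1 ≻ c_0. Let the tie-breaking order T be c_0 ≻ c_{n−1} ≻ c_{n−2} ≻ … ≻ c_1, and let v be the vote c_0 ≻ c_1 ≻ … ≻ c_{n−1}. Then in the profile P_n ++ [v]: (i) the Borda winner is c_0; (ii) the veto winner is c_{n−2}; (iii) N(c_{n−2}, c_0) > N(c_0, c_{n−2}); and hence (iv) the veto+Borda winner is c_{n−2}, not c_0. In particular, adding the single vote v ranking c_0 first does not make c_0 the veto+Borda winner of P_n. -/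

import Mathlib

/-
The Greedy/approximation counterexample profile for `veto + Borda`.
Candidates are `c_0, …, c_{n-1}`, coded as `Fin n`; a vote is a duplicate-free
list of all candidates (earlier = more preferred).
-/

/-- `N P x y`: the number of votes in `P` ranking `x` above `y`. -/
def pairN {n : ℕ} (P : List (List (Fin n))) (x y : Fin n) : ℕ :=
  (P.filter fun v => v.idxOf x < v.idxOf y).length

/-- Borda score: each vote awards `m - r` points to the candidate it ranks in
`r`-th place (here `m = n`, so a 0-based index `t` yields `n - 1 - t`). -/
def bordaScore {n : ℕ} (P : List (List (Fin n))) (e : Fin n) : ℕ :=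
  (P.map fun v => n - 1 - v.idxOf e).sum

/-- The number of votes ranking `e` last. -/
def lastCount {n : ℕ} (P : List (List (Fin n))) (e : Fin n) : ℕ :=
  (P.filter fun v => v.getLast? = some e).length

/-- The Borda winner: the `T`-greatest candidate of maximal Borda score. -/
def bordaWinner {n : ℕ} [NeZero n] (T : LinearOrder (Fin n))
    (P : List (List (Fin n))) : Fin n :=
  @Finset.max' (Fin n) T
    (Finset.univ.filter fun e => ∀ z, bordaScore P z ≤ bordaScore P e) (by
    obtain ⟨w, hw, hm⟩ := Finset.exists_max_image Finset.univ (bordaScore P)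
      Finset.univ_nonempty
    exact ⟨w, Finset.mem_filter.2 ⟨Finset.mem_univ _, fun z => hm z (Finset.mem_univ _)⟩⟩)

/-- The veto winner: the `T`-greatest candidate among those with the fewest
votes ranking them last. -/
def vetoWinner {n : ℕ} [NeZero n] (T : LinearOrder (Fin n))
    (P : List (List (Fin n))) : Fin n :=
  @Finset.max' (Fin n) T
    (Finset.univ.filter fun e => ∀ z, lastCount P e ≤ lastCount P z) (by
    obtain ⟨w, hw, hm⟩ := Finset.exists_min_image Finset.univ (lastCount P)
      Finset.univ_nonempty
    exact ⟨w, Finset.mem_filter.2 ⟨Finset.mem_univ _, fun z => hm z (Finset.mem_univ _)⟩⟩)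

/-- Run-off combination `X + Y`: the common winner if `X` and `Y` agree;
otherwise the pairwise-majority winner between the two winners, with the
`T`-greater candidate winning a tied run-off. -/
def runoffWinner {n : ℕ} (T : LinearOrder (Fin n))
    (X Y : List (List (Fin n)) → Fin n) (P : List (List (Fin n))) : Fin n :=
  let x := X P
  let y := Y P
  if x = y then x
  else if pairN P y x < pairN P x y then x
  else if pairN P x y < pairN P y x then y
  else if T.lt x y then y else x

/-- The tie-breaking order `c_0 ≻ c_{n-1} ≻ c_{n-2} ≻ … ≻ c_1`, realised by
the priority function sending `c_0` to `n` and `c_j` to `j` for `j ≥ 1`. -/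
def Ttb (n : ℕ) : LinearOrder (Fin n) :=
  LinearOrder.lift' (fun e : Fin n => if e.val = 0 then n else e.val) (by
    intro x y h
    have hx := x.isLt
    have hy := y.isLt
    dsimp only at h
    split_ifs at h <;> (try exact Fin.ext (by omega)) <;> (exfalso; omega))

/-- The cyclic vote `c_i ≻ c_{i+1 mod n} ≻ … ≻ c_{i+n-1 mod n}`. -/
def cyc (n : ℕ) (hn : 0 < n) (i : ℕ) : List (Fin n) :=
  (List.range n).map fun t => ⟨(i + t) % n, Nat.mod_lt _ hn⟩

/-- The vote `c_{n-1} ≻ c_{n-2} ≻ … ≻ c_1 ≻ c_0`. -/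
def descVote (n : ℕ) (hn : 0 < n) : List (Fin n) :=
  (List.range n).map fun j => (⟨n - 1 - j, by omega⟩ : Fin n)

/-- The profile `P_n`: the `n` cyclic votes together with the descending vote. -/
def Pn (n : ℕ) (hn : 0 < n) : List (List (Fin n)) :=
  ((List.range n).map fun i => cyc n hn i) ++ [descVote n hn]

/-
The `n` cyclic votes form a Latin square: every candidate occupies every position exactly once,
in particular it is ranked last exactly once. Hence on the cyclic votes Borda is a complete tie
and every candidate is vetoed once. The descending vote and `v` are reverse to each other, so
they preserve the Borda tie (and `T` picks `c_0`), while they veto `c_0` and `c_{n-1}` once more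
(so `T` picks `c_{n-2}` among the least vetoed). In the run-off, `c_{n-2}` precedes `c_0` in the
`n - 2` cyclic votes starting at `c_1, …, c_{n-2}` and in the descending vote, whereas `c_0` wins
only the cyclic votes starting at `c_0` and `c_{n-1}` and the vote `v`; `3 < n - 1` once `n ≥ 5`.
-/

theorem List.idxOf_map_range {α : Type*} [DecidableEq α] {n t : ℕ} {f : ℕ → α}
    (hf : Set.InjOn f (Set.Iio n)) (ht : t < n) : ((List.range n).map f).idxOf (f t) = t := by
  have hnd : ((List.range n).map f).Nodup :=
    List.nodup_range.map_on fun a ha b hb => hf (by simpa using ha) (by simpa using hb)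
  have := hnd.idxOf_getElem t (by simpa using ht)
  simpa only [List.getElem_map, List.getElem_range] using this

theorem List.getLast?_map_range {α : Type*} {n : ℕ} (hn : 0 < n) (f : ℕ → α) :
    ((List.range n).map f).getLast? = some (f (n - 1)) := by
  simp [List.getLast?_eq_getElem?, hn]

theorem Ttb_le_iff {n : ℕ} (x y : Fin n) :
    (Ttb n).le x y ↔ (if x.val = 0 then n else x.val) ≤ (if y.val = 0 then n else y.val) :=
  Iff.rfl

section Profile

variable {n : ℕ} (hn : 0 < n)

theorem cyc_idxOf {i : ℕ} (hi : i < n) (e : Fin n) :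
    (cyc n hn i).idxOf e = if i ≤ e.val then e.val - i else e.val + n - i := by
  have hf : Set.InjOn (fun t => (⟨(i + t) % n, Nat.mod_lt _ hn⟩ : Fin n)) (Set.Iio n) := by
    intro a ha b hb hab
    have := Nat.ModEq.add_left_cancel' i (congrArg Fin.val hab : (i + a) % n = (i + b) % n)
    rwa [Nat.ModEq, Nat.mod_eq_of_lt ha, Nat.mod_eq_of_lt hb] at this
  have he := e.isLt
  rw [cyc]
  convert List.idxOf_map_range hf (t := if i ≤ e.val then e.val - i else e.val + n - i)
    (by split <;> omega)
  split
  · rw [Nat.add_sub_cancel' ‹_›, Nat.mod_eq_of_lt he]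
  · rw [show i + (e.val + n - i) = e.val + n by omega, Nat.add_mod_right, Nat.mod_eq_of_lt he]

theorem descVote_idxOf (e : Fin n) : (descVote n hn).idxOf e = n - 1 - e.val := by
  have hf : Set.InjOn (fun j => (⟨n - 1 - j, by omega⟩ : Fin n)) (Set.Iio n) := by
    intro a ha b hb hab
    have := congrArg Fin.val hab
    simp only [Set.mem_Iio] at ha hb this
    omega
  have he := e.isLt
  rw [descVote]
  convert List.idxOf_map_range hf (t := n - 1 - e.val) (by omega)
  omega

theorem cyc_getLast? {i : ℕ} (hi : i < n) :
    (cyc n hn i).getLast? = some ⟨if i = 0 then n - 1 else i - 1, by split <;> omega⟩ := by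
  rw [cyc, List.getLast?_map_range hn]
  refine congrArg some (Fin.ext ?_)
  dsimp only
  split_ifs with hi0
  · rw [hi0, zero_add, Nat.mod_eq_of_lt (Nat.sub_lt hn one_pos)]
  · rw [show i + (n - 1) = i - 1 + n by omega, Nat.add_mod_right, Nat.mod_eq_of_lt (by omega)]

theorem descVote_getLast? : (descVote n hn).getLast? = some ⟨0, hn⟩ := by
  rw [descVote, List.getLast?_map_range hn]
  exact congrArg some (Fin.ext (Nat.sub_self (n - 1)))

theorem length_filter_Pn_append (p : List (Fin n) → Bool) :
    ((Pn n hn ++ [cyc n hn 0]).filter p).length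
      = ((Finset.range n).filter fun i => p (cyc n hn i)).card
        + (if p (descVote n hn) then 1 else 0) + (if p (cyc n hn 0) then 1 else 0) := by
  simp only [Pn, List.filter_append, List.length_append, List.filter_map, List.length_map,
    List.filter_singleton, Finset.card_def, Finset.filter_val, Finset.range_val, Multiset.range,
    Multiset.filter_coe, Multiset.coe_card]
  cases p (descVote n hn) <;> cases p (cyc n hn 0) <;> simp [Function.comp_def]

theorem sum_range_cyc_idxOf {M : Type*} [AddCommMonoid M] (g : ℕ → M) (e : Fin n) :
    ∑ i ∈ Finset.range n, g ((cyc n hn i).idxOf e) = ∑ t ∈ Finset.range n, g t := by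
  have he := e.isLt
  rw [Finset.sum_congr rfl fun i hi => by rw [cyc_idxOf hn (Finset.mem_range.1 hi)]]
  set φ : ℕ → ℕ := fun t => if t ≤ e.val then e.val - t else e.val + n - t
  refine Finset.sum_nbij' φ φ ?_ ?_ ?_ ?_ fun _ _ => rfl <;> intro a ha <;>
    simp only [φ, Finset.mem_range] at ha ⊢ <;> split_ifs <;> omega

theorem bordaScore_Pn_append (e : Fin n) :
    bordaScore (Pn n hn ++ [cyc n hn 0]) e = ∑ t ∈ Finset.range n, (n - 1 - t) + (n - 1) := by
  have hcyc : ((List.range n).map fun i => n - 1 - (cyc n hn i).idxOf e).sum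
      = ∑ t ∈ Finset.range n, (n - 1 - t) :=
    sum_range_cyc_idxOf hn (fun t => n - 1 - t) e
  simp only [bordaScore, Pn, List.map_append, List.map_map, Function.comp_def, List.sum_append,
    hcyc, List.map_singleton, List.sum_singleton, descVote_idxOf, cyc_idxOf hn hn, zero_le,
    if_true, Nat.sub_zero]
  have he := e.isLt
  omega

theorem lastCount_Pn_append (e : Fin n) :
    lastCount (Pn n hn ++ [cyc n hn 0]) e
      = 1 + (if e.val = 0 then 1 else 0) + (if e.val = n - 1 then 1 else 0) := by
  have he := e.isLt
  have hcyc : ((Finset.range n).filter fun i => decide ((cyc n hn i).getLast? = some e)).card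
      = 1 := by
    rw [Finset.card_eq_one]
    refine ⟨if e.val = n - 1 then 0 else e.val + 1, Finset.ext fun i => ?_⟩
    simp only [Finset.mem_filter, Finset.mem_range, decide_eq_true_eq, Finset.mem_singleton]
    constructor
    · rintro ⟨hi, hlast⟩
      rw [cyc_getLast? hn hi, Option.some.injEq, Fin.ext_iff, Fin.val_mk] at hlast
      split_ifs at hlast ⊢ <;> omega
    · intro hi
      have hi' : i < n := by split_ifs at hi <;> omega
      rw [cyc_getLast? hn hi', Option.some.injEq, Fin.ext_iff, Fin.val_mk]
      exact ⟨hi', by split_ifs at hi ⊢ <;> omega⟩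
  rw [lastCount, length_filter_Pn_append, hcyc, descVote_getLast?, cyc_getLast? hn hn]
  simp only [decide_eq_true_eq, Option.some.injEq, Fin.ext_iff, if_true]
  split_ifs <;> omega

theorem cyc_idxOf_lt_idxOf_zero_iff {i j : ℕ} (hi : i < n) (hj : j < n) :
    (cyc n hn i).idxOf ⟨j, hj⟩ < (cyc n hn i).idxOf ⟨0, hn⟩ ↔ 1 ≤ i ∧ i ≤ j := by
  rw [cyc_idxOf hn hi, cyc_idxOf hn hi]
  dsimp only
  split_ifs <;> omega

theorem cyc_idxOf_zero_lt_idxOf_iff {i j : ℕ} (hi : i < n) (hj0 : 0 < j) (hj : j < n) :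
    (cyc n hn i).idxOf ⟨0, hn⟩ < (cyc n hn i).idxOf ⟨j, hj⟩ ↔ i = 0 ∨ j < i := by
  rw [cyc_idxOf hn hi, cyc_idxOf hn hi]
  dsimp only
  split_ifs <;> omega

theorem pairN_Pn_append_zero_right {j : ℕ} (hj0 : 0 < j) (hj : j < n) :
    pairN (Pn n hn ++ [cyc n hn 0]) ⟨j, hj⟩ ⟨0, hn⟩ = j + 1 := by
  have hcyc : ((Finset.range n).filter fun i =>
      decide ((cyc n hn i).idxOf ⟨j, hj⟩ < (cyc n hn i).idxOf ⟨0, hn⟩))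
      = Finset.Icc 1 j := by
    ext i
    simp only [Finset.mem_filter, Finset.mem_range, decide_eq_true_eq, Finset.mem_Icc]
    exact ⟨fun ⟨hi, h⟩ => (cyc_idxOf_lt_idxOf_zero_iff hn hi hj).1 h,
      fun h => ⟨by omega, (cyc_idxOf_lt_idxOf_zero_iff hn (by omega) hj).2 h⟩⟩
  rw [pairN, length_filter_Pn_append, hcyc, Nat.card_Icc, descVote_idxOf, descVote_idxOf]
  simp only [decide_eq_true_eq, cyc_idxOf_lt_idxOf_zero_iff hn hn hj]
  split_ifs <;> omega

theorem pairN_Pn_append_zero_left {j : ℕ} (hj0 : 0 < j) (hj : j < n) :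
    pairN (Pn n hn ++ [cyc n hn 0]) ⟨0, hn⟩ ⟨j, hj⟩ = n - j + 1 := by
  have hcyc : ((Finset.range n).filter fun i =>
      decide ((cyc n hn i).idxOf ⟨0, hn⟩ < (cyc n hn i).idxOf ⟨j, hj⟩))
      = insert 0 (Finset.Ioo j n) := by
    ext i
    simp only [Finset.mem_filter, Finset.mem_range, decide_eq_true_eq, Finset.mem_insert,
      Finset.mem_Ioo]
    exact ⟨fun ⟨hi, h⟩ => by have := (cyc_idxOf_zero_lt_idxOf_iff hn hi hj0 hj).1 h; omega,
      fun h => ⟨by omega, (cyc_idxOf_zero_lt_idxOf_iff hn (by omega) hj0 hj).2 (by omega)⟩⟩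
  rw [pairN, length_filter_Pn_append, hcyc, Finset.card_insert_of_notMem (by simp),
    Nat.card_Ioo, descVote_idxOf, descVote_idxOf]
  simp only [decide_eq_true_eq, cyc_idxOf_zero_lt_idxOf_iff hn hn hj0 hj, true_or, if_true]
  split_ifs <;> omega

theorem bordaWinner_Pn_append [NeZero n] :
    bordaWinner (Ttb n) (Pn n hn ++ [cyc n hn 0]) = ⟨0, hn⟩ := by
  rw [bordaWinner, @Finset.max'_eq_iff _ (Ttb n)]
  refine ⟨Finset.mem_filter.2 ⟨Finset.mem_univ _, fun z => ?_⟩, fun b _ => ?_⟩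
  · rw [bordaScore_Pn_append, bordaScore_Pn_append]
  · have hb := b.isLt
    rw [Ttb_le_iff]
    dsimp only
    split_ifs <;> omega

theorem vetoWinner_Pn_append [NeZero n] (hn3 : 3 ≤ n) :
    vetoWinner (Ttb n) (Pn n hn ++ [cyc n hn 0]) = ⟨n - 2, by omega⟩ := by
  rw [vetoWinner, @Finset.max'_eq_iff _ (Ttb n)]
  have hcount := lastCount_Pn_append hn
  refine ⟨Finset.mem_filter.2 ⟨Finset.mem_univ _, fun z => ?_⟩, fun b hb => ?_⟩
  · rw [hcount, hcount]
    dsimp only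
    split_ifs <;> omega
  · have hmin := (Finset.mem_filter.1 hb).2 ⟨1, by omega⟩
    have hb := b.isLt
    rw [hcount, hcount] at hmin
    simp only [Ttb_le_iff, one_ne_zero, show 1 ≠ n - 1 by omega, show n - 2 ≠ 0 by omega,
      if_false] at hmin ⊢
    split_ifs at hmin ⊢ <;> omega

end Profile

theorem runoffWinner_eq_left_of_lt {n : ℕ} (T : LinearOrder (Fin n))
    (X Y : List (List (Fin n)) → Fin n) (P : List (List (Fin n))) (hne : X P ≠ Y P)
    (hlt : pairN P (Y P) (X P) < pairN P (X P) (Y P)) : runoffWinner T X Y P = X P := by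
  simp only [runoffWinner, if_neg hne, if_pos hlt]

/-- On the profile `P_n` augmented with the single vote
`v = c_0 ≻ c_1 ≻ … ≻ c_{n-1}` (the Greedy manipulator vote): the Borda winner
is `c_0`, the veto winner is `c_{n-2}`, `c_{n-2}` beats `c_0` in the pairwise
run-off, and hence the `veto + Borda` winner is `c_{n-2} ≠ c_0`; adding the
single vote ranking `c_0` first does not make `c_0` the `veto + Borda`
winner. -/
theorem greedy_veto_borda_counterexample (n : ℕ) (hn : 5 ≤ n) :
    haveI : NeZero n := ⟨by omega⟩
    bordaWinner (Ttb n) (Pn n (by omega) ++ [cyc n (by omega) 0])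
        = (⟨0, by omega⟩ : Fin n) ∧
    vetoWinner (Ttb n) (Pn n (by omega) ++ [cyc n (by omega) 0])
        = (⟨n - 2, by omega⟩ : Fin n) ∧
    pairN (Pn n (by omega) ++ [cyc n (by omega) 0]) (⟨0, by omega⟩ : Fin n) ⟨n - 2, by omega⟩
      < pairN (Pn n (by omega) ++ [cyc n (by omega) 0]) (⟨n - 2, by omega⟩ : Fin n) ⟨0, by omega⟩ ∧
    runoffWinner (Ttb n) (vetoWinner (Ttb n)) (bordaWinner (Ttb n))
        (Pn n (by omega) ++ [cyc n (by omega) 0]) = (⟨n - 2, by omega⟩ : Fin n) ∧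
    (⟨n - 2, by omega⟩ : Fin n) ≠ (⟨0, by omega⟩ : Fin n) := by
  have : NeZero n := ⟨by omega⟩
  have hpos : 0 < n := by omega
  have hborda := bordaWinner_Pn_append hpos
  have hveto := vetoWinner_Pn_append hpos (by omega)
  have hpair : pairN (Pn n hpos ++ [cyc n hpos 0]) ⟨0, hpos⟩ ⟨n - 2, by omega⟩
      < pairN (Pn n hpos ++ [cyc n hpos 0]) ⟨n - 2, by omega⟩ ⟨0, hpos⟩ := by
    rw [pairN_Pn_append_zero_left hpos (by omega), pairN_Pn_append_zero_right hpos (by omega)]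
    omega
  have hne : (⟨n - 2, by omega⟩ : Fin n) ≠ ⟨0, hpos⟩ :=
    Fin.ne_of_val_ne (by dsimp only; omega)
  refine ⟨hborda, hveto, hpair, ?_, hne⟩
  rw [runoffWinner_eq_left_of_lt _ _ _ _ (by rwa [hveto, hborda]) (by rwa [hveto, hborda]), hveto]
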